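/- Let $(A,\circ_A)$ and $(B,\circ_B)$ be Zinbiel algebras, $(\rho,\mu)$ an action of $A$ on $B$, and $T:B\to A$ a relative Rota-Baxter operator of weight $\lambda$, i.e., $Tu\circ_A Tv = T(\rho(Tu)v + \mu(Tv)u + \lambda\, u\circ_B v)$. Then the operation $u\cdot v := \rho(Tu)v + \mu(Tv)u + \lambda\, u\circ_B v$ defines a Zinbiel algebra structure on $B$, and $T$ is a Zinbiel algebra homomorphism from $(B,\cdot)$ to $(A,\circ_A)$. -/

import Mathlib

/-!
Since `T` is a relative Rota-Baxter operator, `T (v · w) = T v ∘_A T w`, which is also the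
homomorphism property. Expanding `u · (v · w)` with this and applying the representation
and action identities, every term lands in one of three families, each matching a family
of terms of `(u · v + v · u) · w`: the `ρ`-terms (by `ρ(x)ρ(y) = ρ(x ∘ y) + ρ(y ∘ x)`), the
terms `μ(T w)(…)`, and the terms `(…) ∘_B w`, the last one using the Zinbiel identity of `B`.
-/

/-- The descendent product `u · v := ρ(Tu)v + μ(Tv)u + λ u ∘_B v` of a relative
Rota-Baxter operator. -/
def relRBDot {K : Type*} [Field K] {A : Type*} [AddCommGroup A] [Module K A]
    {B : Type*} [AddCommGroup B] [Module K B]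
    (mulB : B →ₗ[K] B →ₗ[K] B) (ρ μ : A →ₗ[K] Module.End K B)
    (T : B →ₗ[K] A) (l : K) (u v : B) : B :=
  ρ (T u) v + μ (T v) u + l • mulB u v

section

variable {R : Type*} [CommRing R] {A : Type*} [AddCommGroup A] [Module R A]
  {B : Type*} [AddCommGroup B] [Module R B]
  {mulA : A →ₗ[R] A →ₗ[R] A} {ρ μ : A →ₗ[R] Module.End R B}

theorem rho_apply_rho_apply (hrep1 : ∀ x y : A, ρ x * ρ y = ρ (mulA x y) + ρ (mulA y x))
    (x y : A) (b : B) : ρ x (ρ y b) = ρ (mulA x y) b + ρ (mulA y x) b :=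
  LinearMap.congr_fun (hrep1 x y) b

theorem mu_mulA_apply (hrep3 : ∀ x y : A, μ (mulA x y) = μ y * ρ x + μ y * μ x)
    (x y : A) (b : B) : μ (mulA x y) b = μ y (ρ x b) + μ y (μ x b) :=
  LinearMap.congr_fun (hrep3 x y) b

theorem rho_apply_mu_apply (hrep2 : ∀ x y : A, ρ x * μ y = μ (mulA x y))
    (hrep3 : ∀ x y : A, μ (mulA x y) = μ y * ρ x + μ y * μ x) (x y : A) (b : B) :
    ρ x (μ y b) = μ y (ρ x b) + μ y (μ x b) := by
  rw [← mu_mulA_apply hrep3]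
  exact LinearMap.congr_fun (hrep2 x y) b

end

theorem relRBDot_zinbiel {K : Type*} [Field K] {A : Type*} [AddCommGroup A] [Module K A]
    {B : Type*} [AddCommGroup B] [Module K B] {mulA : A →ₗ[K] A →ₗ[K] A}
    {mulB : B →ₗ[K] B →ₗ[K] B} {ρ μ : A →ₗ[K] Module.End K B} {T : B →ₗ[K] A} {l : K}
    (hZB : ∀ u v w : B, mulB u (mulB v w) = mulB (mulB u v + mulB v u) w)
    (hrep1 : ∀ x y : A, ρ x * ρ y = ρ (mulA x y) + ρ (mulA y x))
    (hrep2 : ∀ x y : A, ρ x * μ y = μ (mulA x y))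
    (hrep3 : ∀ x y : A, μ (mulA x y) = μ y * ρ x + μ y * μ x)
    (hact1 : ∀ (x : A) (u v : B), mulB u (μ x v) = μ x (mulB u v + mulB v u))
    (hact2 : ∀ (x : A) (u v : B), mulB u (ρ x v) = mulB (μ x u) v + mulB (ρ x u) v)
    (hact3 : ∀ (x : A) (u v : B), ρ x (mulB u v) = mulB (μ x u) v + mulB (ρ x u) v)
    (hT : ∀ u v : B, mulA (T u) (T v) = T (ρ (T u) v + μ (T v) u + l • mulB u v)) (u v w : B) :
    relRBDot mulB ρ μ T l u (relRBDot mulB ρ μ T l v w)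
      = relRBDot mulB ρ μ T l (relRBDot mulB ρ μ T l u v + relRBDot mulB ρ μ T l v u) w := by
  simp only [relRBDot]
  rw [← hT v w, map_add T, ← hT u v, ← hT v u]
  simp only [map_add, map_smul, LinearMap.add_apply, LinearMap.smul_apply, smul_add]
  rw [rho_apply_rho_apply hrep1, rho_apply_mu_apply hrep2 hrep3, mu_mulA_apply hrep3,
    hact3, hact2, hact1, hZB]
  simp only [map_add, LinearMap.add_apply, smul_add]
  abel

theorem relative_rota_baxter_descendent_general {K : Type*} [Field K]
    {A : Type*} [AddCommGroup A] [Module K A]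
    {B : Type*} [AddCommGroup B] [Module K B]
    (mulA : A →ₗ[K] A →ₗ[K] A)
    (mulB : B →ₗ[K] B →ₗ[K] B)
    (hZB : ∀ u v w : B, mulB u (mulB v w) = mulB (mulB u v + mulB v u) w)
    (ρ μ : A →ₗ[K] Module.End K B)
    (hrep1 : ∀ x y : A, ρ x * ρ y = ρ (mulA x y) + ρ (mulA y x))
    (hrep2 : ∀ x y : A, ρ x * μ y = μ (mulA x y))
    (hrep3 : ∀ x y : A, μ (mulA x y) = μ y * ρ x + μ y * μ x)
    (hact1 : ∀ (x : A) (u v : B), mulB u (μ x v) = μ x (mulB u v + mulB v u))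
    (hact2 : ∀ (x : A) (u v : B), mulB u (ρ x v) = mulB (μ x u) v + mulB (ρ x u) v)
    (hact3 : ∀ (x : A) (u v : B), ρ x (mulB u v) = mulB (μ x u) v + mulB (ρ x u) v)
    (T : B →ₗ[K] A) (l : K)
    (hT : ∀ u v : B, mulA (T u) (T v) = T (ρ (T u) v + μ (T v) u + l • mulB u v)) :
    (∀ u v w : B,
      relRBDot mulB ρ μ T l u (relRBDot mulB ρ μ T l v w)
        = relRBDot mulB ρ μ T l
            (relRBDot mulB ρ μ T l u v + relRBDot mulB ρ μ T l v u) w) ∧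
    (∀ u v : B, T (relRBDot mulB ρ μ T l u v) = mulA (T u) (T v)) :=
  ⟨relRBDot_zinbiel hZB hrep1 hrep2 hrep3 hact1 hact2 hact3 hT, fun u v => (hT u v).symm⟩

/-- Let `(ρ, μ)` be an action of a Zinbiel algebra `(A, ∘_A)` on a Zinbiel algebra
`(B, ∘_B)` and `T : B → A` a relative Rota-Baxter operator of weight `λ`.  Then
`u · v := ρ(Tu)v + μ(Tv)u + λ u ∘_B v` is a Zinbiel algebra structure on `B`, and `T`
is a Zinbiel algebra homomorphism from `(B, ·)` to `(A, ∘_A)`. -/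
theorem relative_rota_baxter_descendent {K : Type*} [Field K]
    {A : Type*} [AddCommGroup A] [Module K A]
    {B : Type*} [AddCommGroup B] [Module K B]
    (mulA : A →ₗ[K] A →ₗ[K] A)
    (hZA : ∀ x y z : A, mulA x (mulA y z) = mulA (mulA x y + mulA y x) z)
    (mulB : B →ₗ[K] B →ₗ[K] B)
    (hZB : ∀ u v w : B, mulB u (mulB v w) = mulB (mulB u v + mulB v u) w)
    (ρ μ : A →ₗ[K] Module.End K B)
    (hrep1 : ∀ x y : A, ρ x * ρ y = ρ (mulA x y) + ρ (mulA y x))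
    (hrep2 : ∀ x y : A, ρ x * μ y = μ (mulA x y))
    (hrep3 : ∀ x y : A, μ (mulA x y) = μ y * ρ x + μ y * μ x)
    (hact1 : ∀ (x : A) (u v : B), mulB u (μ x v) = μ x (mulB u v + mulB v u))
    (hact2 : ∀ (x : A) (u v : B), mulB u (ρ x v) = mulB (μ x u) v + mulB (ρ x u) v)
    (hact3 : ∀ (x : A) (u v : B), ρ x (mulB u v) = mulB (μ x u) v + mulB (ρ x u) v)
    (T : B →ₗ[K] A) (l : K)
    (hT : ∀ u v : B, mulA (T u) (T v) = T (ρ (T u) v + μ (T v) u + l • mulB u v)) :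
    (∀ u v w : B,
      relRBDot mulB ρ μ T l u (relRBDot mulB ρ μ T l v w)
        = relRBDot mulB ρ μ T l
            (relRBDot mulB ρ μ T l u v + relRBDot mulB ρ μ T l v u) w) ∧
    (∀ u v : B, T (relRBDot mulB ρ μ T l u v) = mulA (T u) (T v)) :=
  relative_rota_baxter_descendent_general mulA mulB hZB ρ μ hrep1 hrep2 hrep3 hact1 hact2 hact3 T l
    hT
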